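/- In the network model, let P_T > 0 and call a beamformer collection V power-feasible if ∑_{f ∈ 𝓕} ∑_{k : β k = b} ‖V k f‖² ≤ |𝓕|·P_T for every b ∈ 𝓑, and call a scheduling variable U admissible if U k f ∈ {0,1} for all k, f and ∑_{k : β k = b} U k f ≤ M for every b ∈ 𝓑 and f ∈ 𝓕. Suppose: (i) U⁰ is admissible and V⁰ is power-feasible; (ii) Γ¹ satisfies Γ¹ k f > −1 for all k, f and f_r(U⁰, V⁰, Γ¹) ≥ f_r(U⁰, V⁰, Γ) for every Γ with Γ k f > −1 for all k, f; (iii) Y¹ satisfies f_q(U⁰, V⁰, Γ¹, Y¹) ≥ f_q(U⁰, V⁰, Γ¹, Y) for every Y : 𝓚 → 𝓕 → ℂ; (iv) V¹ is power-feasible and f_q(U⁰, V¹, Γ¹, Y¹) ≥ f_q(U⁰, V, Γ¹, Y¹) for every power-feasible V; and (v) U¹ is admissible, Ṽ¹ is power-feasible, and f_q(U¹, Ṽ¹, Γ¹, Y¹) ≥ f_q(U⁰, V¹, Γ¹, Y¹). Then f_0(U⁰, V⁰) ≤ f_0(U¹, Ṽ¹); i.e., one iteration of the algorithm does not decrease the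 weighted-sum-rate objective. -/

import Mathlib

open scoped BigOperators

variable {𝓑 𝓕 𝓚 : Type*}

/-- Signal power `S_{k,f}(U,V) = U k f · |⟪h k (β k) f, V k f⟫|²`. -/
noncomputable def sigPow {M : ℕ} (β : 𝓚 → 𝓑)
    (h : 𝓚 → 𝓑 → 𝓕 → EuclideanSpace ℂ (Fin M))
    (U : 𝓚 → 𝓕 → ℝ) (V : 𝓚 → 𝓕 → EuclideanSpace ℂ (Fin M)) (k : 𝓚) (f : 𝓕) : ℝ :=
  U k f * ‖(inner ℂ (h k (β k) f) (V k f) : ℂ)‖ ^ 2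

/-- Interference-plus-noise power
`I_{k,f}(U,V) = ∑_{k' ≠ k} U k' f · |⟪h k (β k') f, V k' f⟫|² + (σ k f)²`. -/
noncomputable def intPow {M : ℕ} [Fintype 𝓚] [DecidableEq 𝓚] (β : 𝓚 → 𝓑)
    (h : 𝓚 → 𝓑 → 𝓕 → EuclideanSpace ℂ (Fin M)) (σ : 𝓚 → 𝓕 → ℝ)
    (U : 𝓚 → 𝓕 → ℝ) (V : 𝓚 → 𝓕 → EuclideanSpace ℂ (Fin M)) (k : 𝓚) (f : 𝓕) : ℝ :=
  (∑ k' ∈ Finset.univ.erase k,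
      U k' f * ‖(inner ℂ (h k (β k') f) (V k' f) : ℂ)‖ ^ 2) + (σ k f) ^ 2

/-- SINR `γ_{k,f}(U,V) = S_{k,f}(U,V) / I_{k,f}(U,V)`. -/
noncomputable def sinr {M : ℕ} [Fintype 𝓚] [DecidableEq 𝓚] (β : 𝓚 → 𝓑)
    (h : 𝓚 → 𝓑 → 𝓕 → EuclideanSpace ℂ (Fin M)) (σ : 𝓚 → 𝓕 → ℝ)
    (U : 𝓚 → 𝓕 → ℝ) (V : 𝓚 → 𝓕 → EuclideanSpace ℂ (Fin M)) (k : 𝓚) (f : 𝓕) : ℝ :=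
  sigPow β h U V k f / intPow β h σ U V k f

/-- Weighted sum rate `f₀(U,V) = ∑_{k,f} w k · log(1 + γ_{k,f}(U,V))`. -/
noncomputable def f0 {M : ℕ} [Fintype 𝓚] [DecidableEq 𝓚] [Fintype 𝓕] (β : 𝓚 → 𝓑)
    (h : 𝓚 → 𝓑 → 𝓕 → EuclideanSpace ℂ (Fin M)) (w : 𝓚 → ℝ) (σ : 𝓚 → 𝓕 → ℝ)
    (U : 𝓚 → 𝓕 → ℝ) (V : 𝓚 → 𝓕 → EuclideanSpace ℂ (Fin M)) : ℝ :=
  ∑ k, ∑ f, w k * Real.log (1 + sinr β h σ U V k f)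

/-- Lagrangian-dual-transform objective `f_r(U,V,Γ)`. -/
noncomputable def fr {M : ℕ} [Fintype 𝓚] [DecidableEq 𝓚] [Fintype 𝓕] (β : 𝓚 → 𝓑)
    (h : 𝓚 → 𝓑 → 𝓕 → EuclideanSpace ℂ (Fin M)) (w : 𝓚 → ℝ) (σ : 𝓚 → 𝓕 → ℝ)
    (U : 𝓚 → 𝓕 → ℝ) (V : 𝓚 → 𝓕 → EuclideanSpace ℂ (Fin M)) (Γ : 𝓚 → 𝓕 → ℝ) : ℝ :=
  ∑ k, ∑ f,
    (w k * Real.log (1 + Γ k f) - w k * Γ k f +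
      w k * (1 + Γ k f) * sigPow β h U V k f /
        (sigPow β h U V k f + intPow β h σ U V k f))

/-- Quadratic-transform objective `f_q(U,V,Γ,Y)`. -/
noncomputable def fq {M : ℕ} [Fintype 𝓚] [DecidableEq 𝓚] [Fintype 𝓕] (β : 𝓚 → 𝓑)
    (h : 𝓚 → 𝓑 → 𝓕 → EuclideanSpace ℂ (Fin M)) (w : 𝓚 → ℝ) (σ : 𝓚 → 𝓕 → ℝ)
    (U : 𝓚 → 𝓕 → ℝ) (V : 𝓚 → 𝓕 → EuclideanSpace ℂ (Fin M)) (Γ : 𝓚 → 𝓕 → ℝ)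
    (Y : 𝓚 → 𝓕 → ℂ) : ℝ :=
  ∑ k, ∑ f,
    (w k * (Real.log (1 + Γ k f) - Γ k f) +
      2 * ((starRingEnd ℂ) (Y k f) *
        (((Real.sqrt (w k * (1 + Γ k f)) * U k f : ℝ) : ℂ) *
          (inner ℂ (V k f) (h k (β k) f) : ℂ))).re -
      ‖Y k f‖ ^ 2 * (sigPow β h U V k f + intPow β h σ U V k f))

/-! Both transforms are minorants of the weighted sum rate that become tight at the optimal
auxiliary variables: `f_q ≤ f_r ≤ f₀` for every `Y` and every `Γ > -1`, with `f_r = f₀` at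
`Γ = γ(U,V)` and `f_q = f_r` at `Y_{k,f} = a_{k,f} / (S_{k,f} + I_{k,f})`. Each update of the
iteration can only raise the surrogate currently being maximised, so
`f₀(U⁰,V⁰) = f_r(U⁰,V⁰,γ) ≤ f_r(U⁰,V⁰,Γ¹) = f_q(U⁰,V⁰,Γ¹,Y*) ≤ … ≤ f_q(U¹,Ṽ¹,Γ¹,Y¹) ≤ f₀(U¹,Ṽ¹)`. -/

open Real

theorem nonneg_of_eq_zero_or_eq_one {α : Type*} [Zero α] [One α] [Preorder α] [ZeroLEOneClass α]
    {x : α} (hx : x = 0 ∨ x = 1) : 0 ≤ x := by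
  rcases hx with rfl | rfl
  exacts [le_rfl, zero_le_one]

theorem two_mul_re_conj_mul_sub_norm_sq_mul_le (a y : ℂ) {d : ℝ} (hd : 0 < d) :
    2 * (starRingEnd ℂ y * a).re - ‖y‖ ^ 2 * d ≤ ‖a‖ ^ 2 / d := by
  rw [le_div_iff₀ hd, Complex.sq_norm, Complex.sq_norm]
  simp only [Complex.normSq_apply, Complex.mul_re, Complex.conj_re, Complex.conj_im]
  nlinarith [sq_nonneg (a.re - y.re * d), sq_nonneg (a.im - y.im * d)]

theorem two_mul_re_conj_div_mul_sub_norm_sq_mul (a : ℂ) {d : ℝ} (hd : d ≠ 0) :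
    2 * (starRingEnd ℂ (a / d) * a).re - ‖a / d‖ ^ 2 * d = ‖a‖ ^ 2 / d := by
  rw [Complex.sq_norm, Complex.sq_norm, Complex.normSq_div, map_div₀, Complex.conj_ofReal,
    div_mul_eq_mul_div, Complex.div_ofReal_re, Complex.normSq_ofReal]
  simp only [Complex.normSq_apply, Complex.mul_re, Complex.conj_re, Complex.conj_im]
  field_simp
  ring

theorem log_one_add_sub_add_mul_div_le {S I Γ : ℝ} (hI : 0 < I) (hSI : 0 < S + I)
    (hΓ : -1 < Γ) :
    log (1 + Γ) - Γ + (1 + Γ) * S / (S + I) ≤ log (1 + S / I) := by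
  have hΓ' : 0 < 1 + Γ := by linarith
  have hγ : 1 + S / I = (S + I) / I := by field_simp; ring
  have hγ' : 0 < 1 + S / I := hγ ▸ div_pos hSI hI
  -- `log x ≤ x - 1` at `x = (1 + Γ) / (1 + S / I)`
  have key := log_le_sub_one_of_pos (div_pos hΓ' hγ')
  rw [log_div hΓ'.ne' hγ'.ne'] at key
  have hsplit : (1 + Γ) / (1 + S / I) + (1 + Γ) * S / (S + I) = 1 + Γ := by
    rw [hγ]; field_simp; ring
  linarith

theorem log_one_add_div_sub_add_mul_div {S I : ℝ} (hI : I ≠ 0) (hSI : S + I ≠ 0) :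
    log (1 + S / I) - S / I + (1 + S / I) * S / (S + I) = log (1 + S / I) := by
  field_simp
  ring

section Network

variable {M : ℕ} (β : 𝓚 → 𝓑) (h : 𝓚 → 𝓑 → 𝓕 → EuclideanSpace ℂ (Fin M)) (w : 𝓚 → ℝ)
  (σ : 𝓚 → 𝓕 → ℝ) (U : 𝓚 → 𝓕 → ℝ) (V : 𝓚 → 𝓕 → EuclideanSpace ℂ (Fin M))
  (Γ : 𝓚 → 𝓕 → ℝ)

theorem sigPow_nonneg {k : 𝓚} {f : 𝓕} (hU : 0 ≤ U k f) : 0 ≤ sigPow β h U V k f :=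
  mul_nonneg hU (sq_nonneg _)

/-- The numerator `a_{k,f}` of the quadratic transform in `f_q`. -/
noncomputable def qtNumerator (k : 𝓚) (f : 𝓕) : ℂ :=
  ((√(w k * (1 + Γ k f)) * U k f : ℝ) : ℂ) * inner ℂ (V k f) (h k (β k) f)

theorem norm_qtNumerator_sq {k : 𝓚} {f : 𝓕} (hw : 0 ≤ w k) (hΓ : -1 < Γ k f)
    (hU : U k f = 0 ∨ U k f = 1) :
    ‖qtNumerator β h w U V Γ k f‖ ^ 2 = w k * (1 + Γ k f) * sigPow β h U V k f := by
  have hwΓ : 0 ≤ w k * (1 + Γ k f) := mul_nonneg hw (by linarith)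
  rw [qtNumerator, sigPow, norm_mul, mul_pow, Complex.norm_real, Real.norm_eq_abs, sq_abs,
    mul_pow, sq_sqrt hwΓ, ← inner_conj_symm, Complex.norm_conj]
  rcases hU with hU | hU <;> rw [hU] <;> ring

variable [Fintype 𝓚] [DecidableEq 𝓚]

theorem intPow_pos {f : 𝓕} (hU : ∀ k, 0 ≤ U k f) (k : 𝓚) (hσ : σ k f ≠ 0) :
    0 < intPow β h σ U V k f :=
  add_pos_of_nonneg_of_pos (Finset.sum_nonneg fun k' _ => mul_nonneg (hU k') (sq_nonneg _))
    (sq_pos_of_ne_zero hσ)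

theorem sigPow_add_intPow_pos {f : 𝓕} (hU : ∀ k, 0 ≤ U k f) (k : 𝓚) (hσ : σ k f ≠ 0) :
    0 < sigPow β h U V k f + intPow β h σ U V k f :=
  add_pos_of_nonneg_of_pos (sigPow_nonneg β h U V (hU k)) (intPow_pos β h σ U V hU k hσ)

variable [Fintype 𝓕]

theorem fq_eq_sum (Y : 𝓚 → 𝓕 → ℂ) :
    fq β h w σ U V Γ Y = ∑ k, ∑ f, (w k * (log (1 + Γ k f) - Γ k f) +
      2 * (starRingEnd ℂ (Y k f) * qtNumerator β h w U V Γ k f).re -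
      ‖Y k f‖ ^ 2 * (sigPow β h U V k f + intPow β h σ U V k f)) :=
  rfl

variable {β h w σ U V Γ}

theorem f0_eq_fr_sinr (hσ : ∀ k f, σ k f ≠ 0) (hU : ∀ k f, 0 ≤ U k f) :
    f0 β h w σ U V = fr β h w σ U V (sinr β h σ U V) := by
  refine Finset.sum_congr rfl fun k _ => Finset.sum_congr rfl fun f _ => ?_
  have := log_one_add_div_sub_add_mul_div (intPow_pos β h σ U V (hU · f) k (hσ k f)).ne'
    (sigPow_add_intPow_pos β h σ U V (hU · f) k (hσ k f)).ne'
  simp only [sinr]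
  linear_combination (-w k) * this

theorem fr_le_f0 (hw : ∀ k, 0 ≤ w k) (hσ : ∀ k f, σ k f ≠ 0) (hU : ∀ k f, 0 ≤ U k f)
    (hΓ : ∀ k f, -1 < Γ k f) :
    fr β h w σ U V Γ ≤ f0 β h w σ U V := by
  refine Finset.sum_le_sum fun k _ => Finset.sum_le_sum fun f _ => ?_
  have := log_one_add_sub_add_mul_div_le (intPow_pos β h σ U V (hU · f) k (hσ k f))
    (sigPow_add_intPow_pos β h σ U V (hU · f) k (hσ k f)) (hΓ k f)
  simp only [sinr]
  linear_combination mul_le_mul_of_nonneg_left this (hw k)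

theorem fq_le_fr (Y : 𝓚 → 𝓕 → ℂ) (hw : ∀ k, 0 ≤ w k) (hσ : ∀ k f, σ k f ≠ 0)
    (hU : ∀ k f, U k f = 0 ∨ U k f = 1) (hΓ : ∀ k f, -1 < Γ k f) :
    fq β h w σ U V Γ Y ≤ fr β h w σ U V Γ := by
  have hU₀ k f := nonneg_of_eq_zero_or_eq_one (hU k f)
  rw [fq_eq_sum]
  refine Finset.sum_le_sum fun k _ => Finset.sum_le_sum fun f _ => ?_
  have := two_mul_re_conj_mul_sub_norm_sq_mul_le (qtNumerator β h w U V Γ k f) (Y k f)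
    (sigPow_add_intPow_pos β h σ U V (hU₀ · f) k (hσ k f))
  rw [norm_qtNumerator_sq β h w U V Γ (hw k) (hΓ k f) (hU k f)] at this
  linear_combination this

theorem exists_fq_eq_fr (hw : ∀ k, 0 ≤ w k) (hσ : ∀ k f, σ k f ≠ 0)
    (hU : ∀ k f, U k f = 0 ∨ U k f = 1) (hΓ : ∀ k f, -1 < Γ k f) :
    ∃ Y, fq β h w σ U V Γ Y = fr β h w σ U V Γ := by
  have hU₀ k f := nonneg_of_eq_zero_or_eq_one (hU k f)
  refine ⟨fun k f => qtNumerator β h w U V Γ k f /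
    ((sigPow β h U V k f + intPow β h σ U V k f : ℝ) : ℂ), ?_⟩
  rw [fq_eq_sum]
  refine Finset.sum_congr rfl fun k _ => Finset.sum_congr rfl fun f _ => ?_
  have := two_mul_re_conj_div_mul_sub_norm_sq_mul (qtNumerator β h w U V Γ k f)
    (sigPow_add_intPow_pos β h σ U V (hU₀ · f) k (hσ k f)).ne'
  rw [norm_qtNumerator_sq β h w U V Γ (hw k) (hΓ k f) (hU k f)] at this
  linear_combination this

end Network

theorem algorithm_nondecreasing_general {M : ℕ} [Fintype 𝓚] [DecidableEq 𝓚] [Fintype 𝓕]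
    [DecidableEq 𝓑]
    (β : 𝓚 → 𝓑) (h : 𝓚 → 𝓑 → 𝓕 → EuclideanSpace ℂ (Fin M))
    (w : 𝓚 → ℝ) (σ : 𝓚 → 𝓕 → ℝ) (hw : ∀ k, 0 < w k) (hσ : ∀ k f, 0 < σ k f)
    -- power feasibility predicate
    (PowerFeasible : (𝓚 → 𝓕 → EuclideanSpace ℂ (Fin M)) → Prop)
    -- admissibility predicate for scheduling variables
    (Admissible : (𝓚 → 𝓕 → ℝ) → Prop)
    (hAdm : ∀ U : 𝓚 → 𝓕 → ℝ,
      Admissible U ↔ ((∀ k f, U k f = 0 ∨ U k f = 1) ∧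
        ∀ b : 𝓑, ∀ f : 𝓕,
          (∑ k ∈ Finset.univ.filter (fun k => β k = b), U k f) ≤ (M : ℝ)))
    -- iterates
    (U0 U1 : 𝓚 → 𝓕 → ℝ) (V0 V1 Vt1 : 𝓚 → 𝓕 → EuclideanSpace ℂ (Fin M))
    (Γ1 : 𝓚 → 𝓕 → ℝ) (Y1 : 𝓚 → 𝓕 → ℂ)
    -- (i)
    (hU0 : Admissible U0) (hV0 : PowerFeasible V0)
    -- (ii)
    (hΓ1 : ∀ k f, -1 < Γ1 k f)
    (hΓ1max : ∀ Γ : 𝓚 → 𝓕 → ℝ, (∀ k f, -1 < Γ k f) →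
      fr β h w σ U0 V0 Γ ≤ fr β h w σ U0 V0 Γ1)
    -- (iii)
    (hY1max : ∀ Y : 𝓚 → 𝓕 → ℂ,
      fq β h w σ U0 V0 Γ1 Y ≤ fq β h w σ U0 V0 Γ1 Y1)
    -- (iv)
    (hV1max : ∀ V : 𝓚 → 𝓕 → EuclideanSpace ℂ (Fin M), PowerFeasible V →
      fq β h w σ U0 V Γ1 Y1 ≤ fq β h w σ U0 V1 Γ1 Y1)
    -- (v)
    (hU1 : Admissible U1)
    (hsched : fq β h w σ U0 V1 Γ1 Y1 ≤ fq β h w σ U1 Vt1 Γ1 Y1) :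
    f0 β h w σ U0 V0 ≤ f0 β h w σ U1 Vt1 := by
  have hw₀ k : 0 ≤ w k := (hw k).le
  have hσ₀ k f : σ k f ≠ 0 := (hσ k f).ne'
  obtain ⟨hU0bin, -⟩ := (hAdm U0).mp hU0
  obtain ⟨hU1bin, -⟩ := (hAdm U1).mp hU1
  have hU0nn k f := nonneg_of_eq_zero_or_eq_one (hU0bin k f)
  have hU1nn k f := nonneg_of_eq_zero_or_eq_one (hU1bin k f)
  have hsinr k f : -1 < sinr β h σ U0 V0 k f :=
    neg_one_lt_zero.trans_le <| div_nonneg (sigPow_nonneg β h U0 V0 (hU0nn k f))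
      (intPow_pos β h σ U0 V0 (hU0nn · f) k (hσ₀ k f)).le
  obtain ⟨Y, hY⟩ := exists_fq_eq_fr (V := V0) hw₀ hσ₀ hU0bin hΓ1
  calc f0 β h w σ U0 V0 = fr β h w σ U0 V0 (sinr β h σ U0 V0) := f0_eq_fr_sinr hσ₀ hU0nn
    _ ≤ fr β h w σ U0 V0 Γ1 := hΓ1max _ hsinr
    _ = fq β h w σ U0 V0 Γ1 Y := hY.symm
    _ ≤ fq β h w σ U0 V0 Γ1 Y1 := hY1max Y
    _ ≤ fq β h w σ U0 V1 Γ1 Y1 := hV1max V0 hV0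
    _ ≤ fq β h w σ U1 Vt1 Γ1 Y1 := hsched
    _ ≤ fr β h w σ U1 Vt1 Γ1 := fq_le_fr Y1 hw₀ hσ₀ hU1bin hΓ1
    _ ≤ f0 β h w σ U1 Vt1 := fr_le_f0 hw₀ hσ₀ hU1nn hΓ1

/-- Theorem 2 of the paper: one iteration of the proposed fractional-programming
algorithm (successive updates of `Γ`, `Y`, `V`, and the joint scheduling/beam
assignment `(U,V)`) does not decrease the weighted sum rate `f₀`. -/
theorem algorithm_nondecreasing {M : ℕ} [Fintype 𝓚] [DecidableEq 𝓚] [Fintype 𝓕]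
    [DecidableEq 𝓑]
    (β : 𝓚 → 𝓑) (h : 𝓚 → 𝓑 → 𝓕 → EuclideanSpace ℂ (Fin M))
    (w : 𝓚 → ℝ) (σ : 𝓚 → 𝓕 → ℝ) (hw : ∀ k, 0 < w k) (hσ : ∀ k f, 0 < σ k f)
    (P_T : ℝ) (hPT : 0 < P_T)
    -- power feasibility predicate
    (PowerFeasible : (𝓚 → 𝓕 → EuclideanSpace ℂ (Fin M)) → Prop)
    (hPF : ∀ V : 𝓚 → 𝓕 → EuclideanSpace ℂ (Fin M),
      PowerFeasible V ↔ ∀ b : 𝓑,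
        (∑ f : 𝓕, ∑ k ∈ Finset.univ.filter (fun k => β k = b), ‖V k f‖ ^ 2) ≤
          (Fintype.card 𝓕 : ℝ) * P_T)
    -- admissibility predicate for scheduling variables
    (Admissible : (𝓚 → 𝓕 → ℝ) → Prop)
    (hAdm : ∀ U : 𝓚 → 𝓕 → ℝ,
      Admissible U ↔ ((∀ k f, U k f = 0 ∨ U k f = 1) ∧
        ∀ b : 𝓑, ∀ f : 𝓕,
          (∑ k ∈ Finset.univ.filter (fun k => β k = b), U k f) ≤ (M : ℝ)))
    -- iterates
    (U0 U1 : 𝓚 → 𝓕 → ℝ) (V0 V1 Vt1 : 𝓚 → 𝓕 → EuclideanSpace ℂ (Fin M))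
    (Γ1 : 𝓚 → 𝓕 → ℝ) (Y1 : 𝓚 → 𝓕 → ℂ)
    -- (i)
    (hU0 : Admissible U0) (hV0 : PowerFeasible V0)
    -- (ii)
    (hΓ1 : ∀ k f, -1 < Γ1 k f)
    (hΓ1max : ∀ Γ : 𝓚 → 𝓕 → ℝ, (∀ k f, -1 < Γ k f) →
      fr β h w σ U0 V0 Γ ≤ fr β h w σ U0 V0 Γ1)
    -- (iii)
    (hY1max : ∀ Y : 𝓚 → 𝓕 → ℂ,
      fq β h w σ U0 V0 Γ1 Y ≤ fq β h w σ U0 V0 Γ1 Y1)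
    -- (iv)
    (hV1 : PowerFeasible V1)
    (hV1max : ∀ V : 𝓚 → 𝓕 → EuclideanSpace ℂ (Fin M), PowerFeasible V →
      fq β h w σ U0 V Γ1 Y1 ≤ fq β h w σ U0 V1 Γ1 Y1)
    -- (v)
    (hU1 : Admissible U1) (hVt1 : PowerFeasible Vt1)
    (hsched : fq β h w σ U0 V1 Γ1 Y1 ≤ fq β h w σ U1 Vt1 Γ1 Y1) :
    f0 β h w σ U0 V0 ≤ f0 β h w σ U1 Vt1 :=
  algorithm_nondecreasing_general β h w σ hw hσ PowerFeasible Admissible hAdm U0 U1 V0 V1 Vt1 Γ1 Y1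
    hU0 hV0 hΓ1 hΓ1max hY1max hV1max hU1 hsched
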